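/- Let 1 → K → G → H → 1 be exact with H finite, and let φ be an automorphism of G with φ(K) = K, restricting to φ' on K. If R(φ') = ∞ then R(φ) = ∞. -/
import Mathlib


/-- The φ-twisted conjugacy relation. -/
def twistedRel {G : Type*} [Group G] (φ : G ≃* G) (x y : G) : Prop :=
  ∃ g : G, y = g * x * (φ g)⁻¹

lemma twistedRel_equiv {G : Type*} [Group G] (φ : G ≃* G) :
    Equivalence (twistedRel φ) := by
  constructor
  · intro x; exact ⟨1, by simp⟩
  · rintro x y ⟨g, rfl⟩; exact ⟨g⁻¹, by simp [map_inv]; group⟩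
  · rintro x y z ⟨g, rfl⟩ ⟨g', rfl⟩; exact ⟨g' * g, by simp [map_mul]; group⟩

lemma twistedRel_mk_eq {G : Type*} [Group G] (φ : G ≃* G) {a b : G} :
    Quot.mk (twistedRel φ) a = Quot.mk (twistedRel φ) b ↔ twistedRel φ a b := by
  rw [Quot.eq]
  exact (twistedRel_equiv φ).eqvGen_iff

theorem reidemeister_infinite_of_restriction {G : Type*} [Group G]
    (K : Subgroup G) [K.Normal] [Finite (G ⧸ K)]
    (φ : G ≃* G) (hK : ∀ g : G, g ∈ K ↔ φ g ∈ K)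
    (φ' : K ≃* K) (hφ' : ∀ k : K, (φ' k : G) = φ (k : G))
    (h : Infinite (Quot (twistedRel φ'))) :
    Infinite (Quot (twistedRel φ)) := by
  classical
  by_contra hfin
  rw [not_infinite_iff_finite] at hfin
  have spec : ∀ q : Quot (twistedRel φ'),
      twistedRel φ ((Quot.mk (twistedRel φ) ((q.out : K) : G)).out) ((q.out : K) : G) := by
    intro q
    rw [← twistedRel_mk_eq]
    exact Quot.out_eq _
  let F : Quot (twistedRel φ') → Quot (twistedRel φ) × (G ⧸ K) :=
    fun q => (Quot.mk (twistedRel φ) ((q.out : K) : G), QuotientGroup.mk (spec q).choose)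
  have hinj : Function.Injective F := by
    intro q₁ q₂ hEq
    have h1 : Quot.mk (twistedRel φ) ((q₁.out : K) : G)
        = Quot.mk (twistedRel φ) ((q₂.out : K) : G) := congrArg Prod.fst hEq
    have h2 : (QuotientGroup.mk (spec q₁).choose : G ⧸ K)
        = QuotientGroup.mk (spec q₂).choose := congrArg Prod.snd hEq
    set g₁ := (spec q₁).choose with hg₁def
    set g₂ := (spec q₂).choose with hg₂def
    have hx : (Quot.mk (twistedRel φ) ((q₁.out : K) : G)).out
        = (Quot.mk (twistedRel φ) ((q₂.out : K) : G)).out := congrArg Quot.out h1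
    set x := (Quot.mk (twistedRel φ) ((q₁.out : K) : G)).out with hxdef
    have e₁ : ((q₁.out : K) : G) = g₁ * x * (φ g₁)⁻¹ := (spec q₁).choose_spec
    have e₂ : ((q₂.out : K) : G) = g₂ * x * (φ g₂)⁻¹ := by
      rw [hxdef, h1]; exact (spec q₂).choose_spec
    have hk0 : g₁⁻¹ * g₂ ∈ K := (QuotientGroup.eq).mp h2
    have hk1 : g₂ * (g₁⁻¹ * g₂) * g₂⁻¹ ∈ K :=
      Subgroup.Normal.conj_mem ‹K.Normal› _ hk0 g₂
    have hk2 : g₂ * g₁⁻¹ ∈ K := by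
      have : g₂ * (g₁⁻¹ * g₂) * g₂⁻¹ = g₂ * g₁⁻¹ := by group
      rwa [this] at hk1
    have hrel : twistedRel φ' q₁.out q₂.out := by
      refine ⟨⟨g₂ * g₁⁻¹, hk2⟩, ?_⟩
      apply Subtype.ext
      push_cast
      rw [hφ']
      rw [e₂, e₁]
      push_cast
      simp [map_mul, map_inv]
      group
    have := Quot.sound hrel
    rw [Quot.out_eq, Quot.out_eq] at this
    exact this
  have : Finite (Quot (twistedRel φ')) := Finite.of_injective F hinj
  exact absurd h (by rw [not_infinite_iff_finite]; exact this)
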